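/- arXiv:1711.01607 — 6 statements merged into one kernel-verified Lean document; each statement's English description precedes it below -/
import Mathlib

section
/- Let K be a compact Hausdorff space, S a semigroup of Markov operators on C(K), L ⊆ K a closed self-supporting set, and i: C(L)' → C(K)' the canonical embedding of measures given by i(μ)(f) = ∫_L f|_L dμ. Then i restricts to a bijection between the S_L-invariant probability measures on L and the S-invariant probability measures on K whose support is contained in L. -/
open MeasureTheory Filter
open scoped NNReal ENNReal Classical Topology

noncomputable def sotEnd (K : Type) [TopologicalSpace K] [CompactSpace K] :
    TopologicalSpace (Module.End ℝ C(K, ℝ)) :=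
  TopologicalSpace.induced (fun T => (⇑T : C(K, ℝ) → C(K, ℝ))) inferInstance

/-- A Markov operator on `C(K, ℝ)`: positive and unital. -/
def IsMarkov {K : Type} [TopologicalSpace K] [CompactSpace K]
    (T : Module.End ℝ C(K, ℝ)) : Prop :=
  (∀ f : C(K, ℝ), 0 ≤ f → 0 ≤ T f) ∧ T 1 = 1

/-- Right amenability of a semigroup of operators on `C(K, ℝ)`, endowed with the
strong operator topology: there is a positive normalized right invariant mean on the
bounded continuous functions on the semigroup. -/
def RightAmenable {K : Type} [TopologicalSpace K] [CompactSpace K]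
    (𝒮 : Subsemigroup (Module.End ℝ C(K, ℝ))) : Prop :=
  letI : TopologicalSpace (Module.End ℝ C(K, ℝ)) := sotEnd K
  ∃ m : BoundedContinuousFunction ↥𝒮 ℝ →ₗ[ℝ] ℝ,
    (∀ f : BoundedContinuousFunction ↥𝒮 ℝ, 0 ≤ f → 0 ≤ m f) ∧
    m 1 = 1 ∧
    ∀ (f g : BoundedContinuousFunction ↥𝒮 ℝ) (S : ↥𝒮),
      (∀ T : ↥𝒮, g T = f (T * S)) → m g = m f

/-- `μ` is invariant under the semigroup `𝒮`, i.e. `S'μ = μ` for all `S ∈ 𝒮`. -/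
def IsInvariantM {K : Type} [TopologicalSpace K] [CompactSpace K] [MeasurableSpace K]
    (𝒮 : Set (Module.End ℝ C(K, ℝ))) (μ : Measure K) : Prop :=
  ∀ T ∈ 𝒮, ∀ f : C(K, ℝ), ∫ x, (T f) x ∂μ = ∫ x, f x ∂μ

/-- `μ` belongs to `P_𝒮(K)`: an `𝒮`-invariant regular Borel probability measure. -/
def InvProb {K : Type} [TopologicalSpace K] [CompactSpace K] [MeasurableSpace K]
    (𝒮 : Set (Module.End ℝ C(K, ℝ))) (μ : Measure K) : Prop :=
  IsProbabilityMeasure μ ∧ μ.Regular ∧ IsInvariantM 𝒮 μ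

/-- `μ` is an ergodic measure for `𝒮`: an extreme point of `P_𝒮(K)`. -/
def IsErgodicM {K : Type} [TopologicalSpace K] [CompactSpace K] [MeasurableSpace K]
    (𝒮 : Set (Module.End ℝ C(K, ℝ))) (μ : Measure K) : Prop :=
  InvProb 𝒮 μ ∧
    ∀ μ₁ μ₂ : Measure K, InvProb 𝒮 μ₁ → InvProb 𝒮 μ₂ →
      ∀ t : ℝ≥0, 0 < t → t < 1 → μ = t • μ₁ + (1 - t) • μ₂ → μ₁ = μ₂

/-- The absolute kernel `I_μ = {f : ∫ |f| dμ = 0}` of a measure. -/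
def absKernel {K : Type} [TopologicalSpace K] [CompactSpace K] [MeasurableSpace K]
    (μ : Measure K) : Set C(K, ℝ) :=
  {f : C(K, ℝ) | ∫ x, |f x| ∂μ = 0}

/-- A primitive `𝒮`-ideal: the absolute kernel of an ergodic invariant measure. -/
def IsPrimitive {K : Type} [TopologicalSpace K] [CompactSpace K] [MeasurableSpace K]
    (𝒮 : Set (Module.End ℝ C(K, ℝ))) (p : Set C(K, ℝ)) : Prop :=
  ∃ μ : Measure K, IsErgodicM 𝒮 μ ∧ p = absKernel μ

/-- An `𝒮`-ideal: a closed proper `𝒮`-invariant (lattice) ideal of `C(K, ℝ)`. -/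
def IsSIdeal {K : Type} [TopologicalSpace K] [CompactSpace K]
    (𝒮 : Set (Module.End ℝ C(K, ℝ))) (I : Set C(K, ℝ)) : Prop :=
  IsClosed I ∧ I ≠ Set.univ ∧ (0 : C(K, ℝ)) ∈ I ∧
    (∀ f ∈ I, ∀ g ∈ I, f + g ∈ I) ∧
    (∀ c : ℝ, ∀ f ∈ I, c • f ∈ I) ∧
    (∀ f ∈ I, ∀ g : C(K, ℝ), |g| ≤ |f| → g ∈ I) ∧
    (∀ T ∈ 𝒮, ∀ f ∈ I, T f ∈ I)

/-- A self-supporting set: `supp (S'δ_x) ⊆ L` for all `x ∈ L`, `S ∈ 𝒮`. -/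
def SelfSupporting {K : Type} [TopologicalSpace K] [CompactSpace K]
    (𝒮 : Set (Module.End ℝ C(K, ℝ))) (L : Set K) : Prop :=
  L.Nonempty ∧ IsClosed L ∧
    ∀ T ∈ 𝒮, ∀ x ∈ L, ∀ f : C(K, ℝ), (∀ y ∈ L, f y = 0) → T f x = 0


/-!
Pushing a measure on `L` forward along the inclusion and pulling a measure on `K` back are
mutually inverse on measures that vanish off `L`, and the integral of `F` against the pushforward
is the integral of `F|_L`, so invariance and total mass transfer verbatim. For regularity, note
that on a compact Hausdorff space a finite measure is regular as soon as it is inner regular by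
compact sets, and inner regularity survives both pushforward and pullback along a closed
embedding.
-/

open Topology

namespace MeasureTheory.Measure

theorem map_comap_subtypeVal_of_measure_compl_eq_zero {α : Type*} [MeasurableSpace α]
    {s : Set α} (hs : MeasurableSet s) {μ : Measure α} (hμ : μ sᶜ = 0) :
    (μ.comap (Subtype.val : s → α)).map Subtype.val = μ := by
  rw [(MeasurableEmbedding.subtype_coe hs).map_comap, Subtype.range_coe,
    restrict_eq_self_of_ae_mem (mem_ae_iff.mpr hμ)]

variable {α β : Type*} [TopologicalSpace α] [MeasurableSpace α] [BorelSpace α]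
  [TopologicalSpace β] [MeasurableSpace β] [BorelSpace β]

/-- Outer regularity comes for free from `InnerRegularWRT.weaklyRegular_of_finite`, since closed
sets are compact. -/
theorem InnerRegular.regular_of_compactSpace [CompactSpace α] [T2Space α] (μ : Measure α)
    [IsFiniteMeasure μ] [μ.InnerRegular] : μ.Regular := by
  have hcompact : μ.InnerRegularWRT IsCompact IsOpen :=
    InnerRegular.innerRegular.mono (fun _ hU => hU.measurableSet) fun _ hK => hK
  have : μ.WeaklyRegular := InnerRegularWRT.weaklyRegular_of_finite μ
    (hcompact.mono (fun _ hU => hU) fun _ hK => hK.isClosed)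
  exact ⟨hcompact⟩

theorem InnerRegular.comap_of_isClosedEmbedding (μ : Measure β) [μ.InnerRegular] {f : α → β}
    (hf : IsClosedEmbedding f) : (μ.comap f).InnerRegular :=
  ⟨InnerRegular.innerRegular.comap hf.measurableEmbedding
    (fun _ hs => hf.measurableEmbedding.measurableSet_image' hs)
    fun _ _ hK => hf.isCompact_preimage hK⟩

theorem regular_map_iff_of_isClosedEmbedding [CompactSpace β] [T2Space β] {μ : Measure α}
    [IsFiniteMeasure μ] {f : α → β} (hf : IsClosedEmbedding f) :
    (μ.map f).Regular ↔ μ.Regular := by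
  have : CompactSpace α := hf.compactSpace
  have : T2Space α := hf.isEmbedding.t2Space
  constructor
  · intro _
    rw [← hf.measurableEmbedding.comap_map μ]
    have := InnerRegular.comap_of_isClosedEmbedding (μ.map f) hf
    exact InnerRegular.regular_of_compactSpace _
  · intro _
    have := InnerRegular.map_of_continuous (μ := μ) hf.continuous
    exact InnerRegular.regular_of_compactSpace _

end MeasureTheory.Measure

open MeasureTheory Measure

theorem invProb_map_subtypeVal_iff {K : Type} [TopologicalSpace K] [CompactSpace K] [T2Space K]
    [MeasurableSpace K] [BorelSpace K] (𝒮 : Set (Module.End ℝ C(K, ℝ))) {L : Set K}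
    (hL : IsClosed L) (ν : Measure L) :
    InvProb 𝒮 (ν.map Subtype.val) ↔ IsProbabilityMeasure ν ∧ ν.Regular ∧
      ∀ T ∈ 𝒮, ∀ F : C(K, ℝ), ∫ x : L, T F x ∂ν = ∫ x : L, F x ∂ν := by
  have hemb := hL.isClosedEmbedding_subtypeVal
  simp only [InvProb, IsInvariantM, hemb.measurableEmbedding.integral_map,
    isProbabilityMeasure_map_iff hemb.continuous.aemeasurable]
  exact and_congr_right fun _ => and_congr_left' (regular_map_iff_of_isClosedEmbedding hemb)

theorem stmt4_general {K : Type} [TopologicalSpace K] [CompactSpace K] [T2Space K]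
    [MeasurableSpace K] [BorelSpace K]
    (𝒮 : Subsemigroup (Module.End ℝ C(K, ℝ)))
    (L : Set K) (hL : SelfSupporting (𝒮 : Set (Module.End ℝ C(K, ℝ))) L) :
    Set.BijOn (fun ν : Measure ↥L => ν.map (Subtype.val : ↥L → K))
      {ν : Measure ↥L | IsProbabilityMeasure ν ∧ ν.Regular ∧
        ∀ T ∈ 𝒮, ∀ F : C(K, ℝ), ∫ x : ↥L, (T F) ↑x ∂ν = ∫ x : ↥L, F ↑x ∂ν}
      {m : Measure K | InvProb (𝒮 : Set (Module.End ℝ C(K, ℝ))) m ∧ m Lᶜ = 0} := by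
  have hLc : IsClosed L := hL.2.1
  have hemb := MeasurableEmbedding.subtype_coe hLc.measurableSet
  refine Set.InvOn.bijOn (f' := fun m => m.comap Subtype.val)
    ⟨fun ν _ => hemb.comap_map ν,
      fun m hm => map_comap_subtypeVal_of_measure_compl_eq_zero hLc.measurableSet hm.2⟩ ?_ ?_
  · intro ν hν
    refine ⟨(invProb_map_subtypeVal_iff (𝒮 : Set (Module.End ℝ C(K, ℝ))) hLc ν).mpr hν, ?_⟩
    rw [hemb.map_apply]
    simp
  · rintro m ⟨hm, hmL⟩
    refine (invProb_map_subtypeVal_iff (𝒮 : Set (Module.End ℝ C(K, ℝ))) hLc _).mp ?_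
    rwa [map_comap_subtypeVal_of_measure_compl_eq_zero hLc.measurableSet hmL]

/-- For a self-supporting closed set `L`, pushforward along the inclusion `L → K` is a
bijection between the `𝒮_L`-invariant probability measures on `L` and the `𝒮`-invariant
probability measures on `K` supported in `L`. -/
theorem stmt4 {K : Type} [TopologicalSpace K] [CompactSpace K] [T2Space K]
    [MeasurableSpace K] [BorelSpace K]
    (𝒮 : Subsemigroup (Module.End ℝ C(K, ℝ))) (hMarkov : ∀ T ∈ 𝒮, IsMarkov T)
    (L : Set K) (hL : SelfSupporting (𝒮 : Set (Module.End ℝ C(K, ℝ))) L) :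
    Set.BijOn (fun ν : Measure ↥L => ν.map (Subtype.val : ↥L → K))
      {ν : Measure ↥L | IsProbabilityMeasure ν ∧ ν.Regular ∧
        ∀ T ∈ 𝒮, ∀ F : C(K, ℝ), ∫ x : ↥L, (T F) ↑x ∂ν = ∫ x : ↥L, F ↑x ∂ν}
      {m : Measure K | InvProb (𝒮 : Set (Module.End ℝ C(K, ℝ))) m ∧ m Lᶜ = 0} :=
  stmt4_general 𝒮 L hL
end

section
/- Let K be a compact Hausdorff space, S a semigroup of Markov operators on C(K), L ⊆ K a closed self-supporting set, and i the canonical embedding of measures on L into measures on K. If μ is an extreme point of the invariant probability measures P_{S_L}(L), then i(μ) is an extreme point of P_S(K). -/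
open MeasureTheory Filter
open scoped NNReal ENNReal Classical Topology

/-! Pushing forward along the inclusion `L ↪ K` and pulling back identifies the measures on `L`
with the measures on `K` that are carried by `L`, and preserves being a regular invariant
probability measure. Measures carried by `L` form a face of `P_𝒮(K)`: if a proper convex
combination vanishes on `K \ L`, so do both summands. -/

namespace MeasureTheory.Measure

variable {α β : Type*} [MeasurableSpace α] [MeasurableSpace β]

theorem InnerRegular.comap_of_isInducing [TopologicalSpace α] [TopologicalSpace β]
    (μ : Measure β) [H : μ.InnerRegular] {f : α → β} (hf : Topology.IsInducing f)
    (hme : MeasurableEmbedding f) : (μ.comap f).InnerRegular :=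
  ⟨H.innerRegular.comap hme (fun _ hU ↦ hme.measurableSet_image' hU)
    (fun _ hKrange hK ↦ hf.isCompact_preimage' hK hKrange)⟩

theorem Regular.comap_of_isInducing [TopologicalSpace α] [R1Space α] [BorelSpace α]
    [TopologicalSpace β] (μ : Measure β) [IsFiniteMeasure μ] [μ.Regular] {f : α → β}
    (hf : Topology.IsInducing f) (hme : MeasurableEmbedding f) : (μ.comap f).Regular := by
  have := InnerRegular.comap_of_isInducing μ hf hme
  infer_instance

theorem Regular.map_of_continuous [TopologicalSpace α] [BorelSpace α] [TopologicalSpace β]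
    [R1Space β] [BorelSpace β] (μ : Measure α) [IsFiniteMeasure μ] [μ.Regular] {f : α → β}
    (hf : Continuous f) : (μ.map f).Regular := by
  have := InnerRegular.map_of_continuous (μ := μ) hf
  infer_instance

theorem map_comap_of_null_compl_range {f : α → β} (hf : MeasurableEmbedding f) {μ : Measure β}
    (h : μ (Set.range f)ᶜ = 0) : (μ.comap f).map f = μ := by
  rw [hf.map_comap]
  exact restrict_eq_self_of_ae_mem <|
    (measure_eq_zero_iff_ae_notMem.mp h).mono fun _ hx ↦ not_not.mp hx

theorem null_of_null_convexCombination {μ₁ μ₂ : Measure α} {t : ℝ≥0} (ht0 : 0 < t)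
    (ht1 : t < 1) {s : Set α} (h : (t • μ₁ + (1 - t) • μ₂) s = 0) : μ₁ s = 0 ∧ μ₂ s = 0 := by
  have ht1' : (1 : ℝ≥0∞) - t ≠ 0 := (tsub_pos_of_lt (by exact_mod_cast ht1)).ne'
  simpa [ht0.ne', ht1'] using h

end MeasureTheory.Measure

section

variable {K X : Type} [TopologicalSpace K] [CompactSpace K] [MeasurableSpace K]
  [MeasurableSpace X]

theorem isInvariantM_map_iff (𝒮 : Set (Module.End ℝ C(K, ℝ))) {e : X → K}
    (he : MeasurableEmbedding e) (ν : Measure X) :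
    IsInvariantM 𝒮 (ν.map e) ↔
      ∀ T ∈ 𝒮, ∀ F : C(K, ℝ), ∫ x, T F (e x) ∂ν = ∫ x, F (e x) ∂ν := by
  simp only [IsInvariantM, he.integral_map]

theorem invProb_map_iff [R1Space K] [BorelSpace K] [TopologicalSpace X] [R1Space X]
    [BorelSpace X] (𝒮 : Set (Module.End ℝ C(K, ℝ)))
    {e : X → K} (he : Topology.IsClosedEmbedding e) (ν : Measure X) :
    InvProb 𝒮 (ν.map e) ↔ IsProbabilityMeasure ν ∧ ν.Regular ∧
      ∀ T ∈ 𝒮, ∀ F : C(K, ℝ), ∫ x, T F (e x) ∂ν = ∫ x, F (e x) ∂ν := by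
  have hme := he.measurableEmbedding
  rw [InvProb, isInvariantM_map_iff 𝒮 hme,
    Measure.isProbabilityMeasure_map_iff hme.measurable.aemeasurable]
  refine and_congr_right fun _ ↦ and_congr_left fun _ ↦ ⟨fun _ ↦ ?_, fun _ ↦ ?_⟩
  · rw [← hme.comap_map ν]
    exact Measure.Regular.comap_of_isInducing _ he.isInducing hme
  · exact Measure.Regular.map_of_continuous ν he.continuous

end

theorem stmt5_general {K : Type} [TopologicalSpace K] [CompactSpace K] [T2Space K]
    [MeasurableSpace K] [BorelSpace K]
    (𝒮 : Subsemigroup (Module.End ℝ C(K, ℝ)))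
    (L : Set K) (hL : SelfSupporting (𝒮 : Set (Module.End ℝ C(K, ℝ))) L)
    (ν : Measure ↥L)
    (hν : IsProbabilityMeasure ν ∧ ν.Regular ∧
      ∀ T ∈ 𝒮, ∀ F : C(K, ℝ), ∫ x : ↥L, (T F) ↑x ∂ν = ∫ x : ↥L, F ↑x ∂ν)
    (hext : ∀ ν₁ ν₂ : Measure ↥L,
      (IsProbabilityMeasure ν₁ ∧ ν₁.Regular ∧
        ∀ T ∈ 𝒮, ∀ F : C(K, ℝ), ∫ x : ↥L, (T F) ↑x ∂ν₁ = ∫ x : ↥L, F ↑x ∂ν₁) →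
      (IsProbabilityMeasure ν₂ ∧ ν₂.Regular ∧
        ∀ T ∈ 𝒮, ∀ F : C(K, ℝ), ∫ x : ↥L, (T F) ↑x ∂ν₂ = ∫ x : ↥L, F ↑x ∂ν₂) →
      ∀ t : ℝ≥0, 0 < t → t < 1 → ν = t • ν₁ + (1 - t) • ν₂ → ν₁ = ν₂) :
    IsErgodicM (𝒮 : Set (Module.End ℝ C(K, ℝ))) (ν.map (Subtype.val : ↥L → K)) := by
  have he : Topology.IsClosedEmbedding (Subtype.val : ↥L → K) :=
    hL.2.1.isClosedEmbedding_subtypeVal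
  have hme := he.measurableEmbedding
  have hνL : ν.map Subtype.val (Set.range (Subtype.val : ↥L → K))ᶜ = 0 := by
    rw [hme.map_apply, Set.preimage_compl, Set.preimage_range, Set.compl_univ, measure_empty]
  refine ⟨(invProb_map_iff _ he ν).2 hν, fun μ₁ μ₂ h₁ h₂ t ht0 ht1 hmix ↦ ?_⟩
  obtain ⟨hμ₁L, hμ₂L⟩ := Measure.null_of_null_convexCombination ht0 ht1 (hmix ▸ hνL)
  obtain ⟨ν₁, rfl⟩ : ∃ ν' : Measure ↥L, ν'.map Subtype.val = μ₁ :=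
    ⟨_, Measure.map_comap_of_null_compl_range hme hμ₁L⟩
  obtain ⟨ν₂, rfl⟩ : ∃ ν' : Measure ↥L, ν'.map Subtype.val = μ₂ :=
    ⟨_, Measure.map_comap_of_null_compl_range hme hμ₂L⟩
  congr 1
  refine hext _ _ ((invProb_map_iff _ he _).1 h₁) ((invProb_map_iff _ he _).1 h₂) t ht0 ht1 ?_
  apply hme.map_injective
  rwa [Measure.map_add _ _ hme.measurable, Measure.map_smul, Measure.map_smul]

/-- If `ν` is an extreme point of the invariant probability measures of the induced
semigroup on a self-supporting set `L`, then its pushforward `i(ν)` is an extreme point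
of `P_𝒮(K)`. -/
theorem stmt5 {K : Type} [TopologicalSpace K] [CompactSpace K] [T2Space K]
    [MeasurableSpace K] [BorelSpace K]
    (𝒮 : Subsemigroup (Module.End ℝ C(K, ℝ))) (hMarkov : ∀ T ∈ 𝒮, IsMarkov T)
    (L : Set K) (hL : SelfSupporting (𝒮 : Set (Module.End ℝ C(K, ℝ))) L)
    (ν : Measure ↥L)
    (hν : IsProbabilityMeasure ν ∧ ν.Regular ∧
      ∀ T ∈ 𝒮, ∀ F : C(K, ℝ), ∫ x : ↥L, (T F) ↑x ∂ν = ∫ x : ↥L, F ↑x ∂ν)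
    (hext : ∀ ν₁ ν₂ : Measure ↥L,
      (IsProbabilityMeasure ν₁ ∧ ν₁.Regular ∧
        ∀ T ∈ 𝒮, ∀ F : C(K, ℝ), ∫ x : ↥L, (T F) ↑x ∂ν₁ = ∫ x : ↥L, F ↑x ∂ν₁) →
      (IsProbabilityMeasure ν₂ ∧ ν₂.Regular ∧
        ∀ T ∈ 𝒮, ∀ F : C(K, ℝ), ∫ x : ↥L, (T F) ↑x ∂ν₂ = ∫ x : ↥L, F ↑x ∂ν₂) →
      ∀ t : ℝ≥0, 0 < t → t < 1 → ν = t • ν₁ + (1 - t) • ν₂ → ν₁ = ν₂) :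
    IsErgodicM (𝒮 : Set (Module.End ℝ C(K, ℝ))) (ν.map (Subtype.val : ↥L → K)) :=
  stmt5_general 𝒮 L hL ν hν hext
end

section
/- Let K be a compact metrizable space, S a right amenable semigroup of Markov operators on C(K), and I a radical S-ideal, i.e., I equals the intersection of all absolute kernels I_μ of ergodic S-invariant measures μ containing I. Then there exists an S-invariant probability measure ν with I = I_ν. -/
open MeasureTheory Filter
open scoped NNReal ENNReal Classical Topology

/-! Since `I` is proper, some ergodic measure has `I` inside its kernel. The complements of the
kernels `I_μ` are open in the separable metric space `C(K, ℝ)`, so by the Lindelöf property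
countably many ergodic `μₙ` already cut out `I`. The mixture `ν = ∑ 2^{-(n+1)} μₙ` is an invariant
probability measure, and a continuous function vanishes `ν`-a.e. iff it vanishes `μₙ`-a.e. for
every `n`; hence `I_ν = ⋂ₙ I_{μₙ} = I`. -/

open Set TopologicalSpace

section GeomMixture

variable {α : Type*} [MeasurableSpace α]

noncomputable def geomMixture (μs : ℕ → Measure α) : Measure α :=
  Measure.sum fun n => (2⁻¹ : ℝ≥0∞) ^ (n + 1) • μs n

instance isProbabilityMeasure_geomMixture (μs : ℕ → Measure α)
    [∀ n, IsProbabilityMeasure (μs n)] : IsProbabilityMeasure (geomMixture μs) := by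
  constructor
  simp only [geomMixture, Measure.sum_apply _ MeasurableSet.univ, Measure.smul_apply,
    measure_univ, smul_eq_mul, mul_one]
  rw [ENNReal.tsum_geometric_add_one, ENNReal.one_sub_inv_two, inv_inv,
    ENNReal.inv_mul_cancel two_ne_zero ENNReal.ofNat_ne_top]

lemma ae_geomMixture_iff (μs : ℕ → Measure α) {p : α → Prop} :
    (∀ᵐ x ∂geomMixture μs, p x) ↔ ∀ n, ∀ᵐ x ∂μs n, p x := by
  simp only [geomMixture, Measure.ae_sum_iff,
    Measure.ae_ennreal_smul_measure_iff
      (pow_ne_zero _ (ENNReal.inv_ne_zero.2 ENNReal.ofNat_ne_top))]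

lemma integral_geomMixture (μs : ℕ → Measure α) {f : α → ℝ}
    (hf : Integrable f (geomMixture μs)) :
    ∫ x, f x ∂geomMixture μs = ∑' n, (2⁻¹ : ℝ) ^ (n + 1) * ∫ x, f x ∂μs n := by
  simp only [geomMixture, integral_sum_measure hf, integral_smul_measure, smul_eq_mul,
    ENNReal.toReal_pow, ENNReal.toReal_inv, ENNReal.toReal_ofNat]

end GeomMixture

section ContinuousFunctions

variable {K : Type} [TopologicalSpace K] [CompactSpace K] [MeasurableSpace K]
  [OpensMeasurableSpace K]

lemma ContinuousMap.integrable_of_compactSpace (μ : Measure K) [IsFiniteMeasure μ]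
    (f : C(K, ℝ)) : Integrable f μ :=
  f.continuous.integrable_of_hasCompactSupport (isClosed_tsupport _).isCompact

lemma mem_absKernel_iff_ae_eq_zero (μ : Measure K) [IsFiniteMeasure μ] (f : C(K, ℝ)) :
    f ∈ absKernel μ ↔ ⇑f =ᵐ[μ] 0 := by
  rw [absKernel, mem_ofPred_eq, integral_eq_zero_iff_of_nonneg (fun x => abs_nonneg _)
    (f.integrable_of_compactSpace μ).abs]
  simp only [EventuallyEq, Pi.zero_apply, abs_eq_zero]

lemma lipschitzWith_integral_abs (μ : Measure K) [IsFiniteMeasure μ] :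
    LipschitzWith (μ.real univ).toNNReal fun f : C(K, ℝ) => ∫ x, |f x| ∂μ := by
  refine LipschitzWith.of_le_add_mul' _ fun f g => ?_
  have hpt : ∀ x, |f x| ≤ |g x| + dist f g := fun x => by
    have := abs_sub_abs_le_abs_sub (f x) (g x)
    have := ContinuousMap.dist_apply_le_dist (f := f) (g := g) x
    rw [Real.dist_eq] at this
    linarith
  calc ∫ x, |f x| ∂μ ≤ ∫ x, (|g x| + dist f g) ∂μ :=
        integral_mono (f.integrable_of_compactSpace μ).abs
          ((g.integrable_of_compactSpace μ).abs.add (integrable_const _)) hpt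
    _ = ∫ x, |g x| ∂μ + μ.real univ * dist f g := by
        rw [integral_add (g.integrable_of_compactSpace μ).abs (integrable_const _),
          integral_const, smul_eq_mul]

lemma isClosed_absKernel (μ : Measure K) [IsFiniteMeasure μ] : IsClosed (absKernel μ) :=
  isClosed_eq (lipschitzWith_integral_abs μ).continuous continuous_const

lemma exists_seq_biInter_absKernel_eq [SecondCountableTopology C(K, ℝ)] {M : Set (Measure K)}
    (hM : M.Nonempty) (hfin : ∀ μ ∈ M, IsFiniteMeasure μ) :
    ∃ μs : ℕ → Measure K, (∀ n, μs n ∈ M) ∧ ⋂ μ ∈ M, absKernel μ = ⋂ n, absKernel (μs n) := by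
  obtain ⟨μ₀, hμ₀⟩ := hM
  obtain ⟨T, hTM, hTc, hT⟩ := isOpen_biUnion_countable M (fun μ => (absKernel μ)ᶜ)
    fun μ hμ => have := hfin μ hμ; (isClosed_absKernel μ).isOpen_compl
  obtain ⟨μs, hμs⟩ := (hTc.insert μ₀).exists_eq_range (insert_nonempty μ₀ T)
  have hμsM : ∀ n, μs n ∈ M := fun n => insert_subset hμ₀ hTM (hμs ▸ mem_range_self n)
  rw [← compl_iInter₂, ← compl_iInter₂, compl_inj_iff] at hT
  refine ⟨μs, hμsM, subset_antisymm (subset_iInter fun n => biInter_subset_of_mem (hμsM n)) ?_⟩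
  rw [← hT]
  refine subset_iInter₂ fun μ hμ => ?_
  obtain ⟨n, rfl⟩ : μ ∈ range μs := hμs ▸ mem_insert_of_mem μ₀ hμ
  exact iInter_subset _ n

lemma absKernel_geomMixture (μs : ℕ → Measure K) [∀ n, IsProbabilityMeasure (μs n)] :
    absKernel (geomMixture μs) = ⋂ n, absKernel (μs n) := by
  ext f
  simp only [mem_iInter, mem_absKernel_iff_ae_eq_zero]
  exact ae_geomMixture_iff μs

lemma isInvariantM_geomMixture {𝒮 : Set (Module.End ℝ C(K, ℝ))} (μs : ℕ → Measure K)
    [∀ n, IsProbabilityMeasure (μs n)] (h : ∀ n, IsInvariantM 𝒮 (μs n)) :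
    IsInvariantM 𝒮 (geomMixture μs) := fun T hT f => by
  simp only [integral_geomMixture μs ((T f).integrable_of_compactSpace _),
    integral_geomMixture μs (f.integrable_of_compactSpace _), h _ T hT f]

end ContinuousFunctions

theorem stmt8_general {K : Type} [TopologicalSpace K] [CompactSpace K]
    [TopologicalSpace.MetrizableSpace K] [MeasurableSpace K] [BorelSpace K]
    (𝒮 : Subsemigroup (Module.End ℝ C(K, ℝ)))
    (I : Set C(K, ℝ)) (hI : IsSIdeal (𝒮 : Set (Module.End ℝ C(K, ℝ))) I)
    (hrad : I = ⋂ μ ∈ {μ : Measure K |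
        IsErgodicM (𝒮 : Set (Module.End ℝ C(K, ℝ))) μ ∧ I ⊆ absKernel μ},
      absKernel μ) :
    ∃ ν : Measure K, InvProb (𝒮 : Set (Module.End ℝ C(K, ℝ))) ν ∧ I = absKernel ν := by
  set E := {μ : Measure K | IsErgodicM (𝒮 : Set (Module.End ℝ C(K, ℝ))) μ ∧ I ⊆ absKernel μ}
  have hE : E.Nonempty := by
    refine nonempty_iff_ne_empty.2 fun hempty => hI.2.1 ?_
    rw [hrad, hempty, biInter_empty]
  obtain ⟨μs, hμsE, hμs⟩ := exists_seq_biInter_absKernel_eq hE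
    fun μ hμ => have := hμ.1.1.1; inferInstance
  have : ∀ n, IsProbabilityMeasure (μs n) := fun n => (hμsE n).1.1.1
  -- regularity: finite measures on compact metrizable spaces are regular
  refine ⟨geomMixture μs, ⟨inferInstance, inferInstance,
    isInvariantM_geomMixture μs fun n => (hμsE n).1.1.2.2⟩, ?_⟩
  rw [absKernel_geomMixture, ← hμs, ← hrad]

/-- On a compact metrizable space, every radical `𝒮`-ideal is the absolute kernel of a
single invariant probability measure. -/
theorem stmt8 {K : Type} [TopologicalSpace K] [CompactSpace K] [T2Space K]
    [TopologicalSpace.MetrizableSpace K] [MeasurableSpace K] [BorelSpace K]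
    (𝒮 : Subsemigroup (Module.End ℝ C(K, ℝ))) (hMarkov : ∀ T ∈ 𝒮, IsMarkov T)
    (ham : RightAmenable 𝒮)
    (I : Set C(K, ℝ)) (hI : IsSIdeal (𝒮 : Set (Module.End ℝ C(K, ℝ))) I)
    (hrad : I = ⋂ μ ∈ {μ : Measure K |
        IsErgodicM (𝒮 : Set (Module.End ℝ C(K, ℝ))) μ ∧ I ⊆ absKernel μ},
      absKernel μ) :
    ∃ ν : Measure K, InvProb (𝒮 : Set (Module.End ℝ C(K, ℝ))) ν ∧ I = absKernel ν :=
  stmt8_general 𝒮 I hI hrad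
end

section
/- Let φ: K → K be continuous on a compact Hausdorff space K, T_φ the Koopman operator. For f ∈ C(K), one has ∫|f| dμ = 0 for every φ-invariant regular Borel probability measure μ if and only if lim_{N→∞} (1/N) Σ_{n=0}^{N−1} |⟨T_φ^n f, ν⟩| = 0 for every ν ∈ C(K)'. -/
/-!
If every invariant measure kills `|f|`, the Birkhoff averages of `|f|` tend to `0` uniformly:
otherwise a weak-* cluster point of the orbit averages `(1/N) ∑_{n<N} δ_{φⁿ x}`, taken over the
pairs `(N, x)` where the average of `|f|` stays large, is a positive, normalized, `φ`-invariant
functional, i.e. (Riesz–Markov–Kakutani) an invariant regular probability measure with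
`∫ |f| dμ > 0`. Rotating the phases of the summands gives
`∑_{n<N} |⟨T_φⁿ f, ψ⟩| ≤ ‖ψ‖ · sup_x ∑_{n<N} |f (φⁿ x)|`, so uniform convergence of the averages
of `|f|` yields the Cesàro convergence for every `ψ`. Conversely, testing with Dirac functionals
gives pointwise convergence of the averages of `|f|` to `0`, and dominated convergence together
with invariance of `μ` turns this into `∫ |f| dμ = 0`.
-/

open MeasureTheory Filter Topology CompactlySupported

theorem MapClusterPt.eq_of_tendsto {X ι : Type*} [TopologicalSpace X] [T2Space X]
    {F : Filter ι} {u : ι → X} {a b : X} (ha : MapClusterPt a F u) (hb : Tendsto u F (𝓝 b)) :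
    a = b :=
  eq_of_nhds_neBot (ha.clusterPt.mono hb)

theorem birkhoffAverage_comp_apply {R α M : Type*} [DivisionSemiring R] [AddCommMonoid M]
    [Module R M] (f : α → α) (g : α → M) (n : ℕ) (x : α) :
    birkhoffAverage R f (g ∘ f) n x = birkhoffAverage R f g n (f x) := by
  simp only [birkhoffAverage, birkhoffSum, Function.comp_apply, ← Function.iterate_succ_apply',
    Function.iterate_succ_apply]

theorem birkhoffAverage_nonneg {α : Type*} (f : α → α) {g : α → ℝ} (hg : ∀ x, 0 ≤ g x)
    (n : ℕ) (x : α) : 0 ≤ birkhoffAverage ℝ f g n x :=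
  smul_nonneg (by positivity) (Finset.sum_nonneg fun _ _ => hg _)

theorem norm_birkhoffAverage_le {α E : Type*} [SeminormedAddCommGroup E] [NormedSpace ℝ E]
    (f : α → α) {g : α → E} {C : ℝ} (hC : 0 ≤ C) (hg : ∀ x, ‖g x‖ ≤ C) (n : ℕ) (x : α) :
    ‖birkhoffAverage ℝ f g n x‖ ≤ C := by
  rcases n.eq_zero_or_pos with rfl | hn
  · simpa using hC
  have hn' : (0 : ℝ) < n := by exact_mod_cast hn
  calc ‖birkhoffAverage ℝ f g n x‖
      ≤ (n : ℝ)⁻¹ * ∑ k ∈ Finset.range n, ‖g (f^[k] x)‖ := by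
        rw [birkhoffAverage, birkhoffSum, norm_smul, norm_inv, Real.norm_natCast]
        gcongr
        exact norm_sum_le _ _
    _ ≤ (n : ℝ)⁻¹ * (n * C) := by
        gcongr
        simpa using Finset.sum_le_card_nsmul (Finset.range n) _ C fun k _ => hg _
    _ = C := by field_simp

namespace MeasureTheory.MeasurePreserving

variable {α E : Type*} [MeasurableSpace α] [NormedAddCommGroup E] [NormedSpace ℝ E]
  {μ : Measure α} {f : α → α} {g : α → E}

theorem integrable_birkhoffAverage (hf : MeasurePreserving f μ μ) (hg : Integrable g μ)
    (n : ℕ) : Integrable (birkhoffAverage ℝ f g n) μ :=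
  (integrable_finsetSum _ fun k _ => (hf.iterate k).integrable_comp_of_integrable hg).smul _

theorem integral_birkhoffAverage (hf : MeasurePreserving f μ μ) (hg : Integrable g μ) {n : ℕ}
    (hn : n ≠ 0) : ∫ x, birkhoffAverage ℝ f g n x ∂μ = ∫ x, g x ∂μ := by
  have hcomp (k : ℕ) : ∫ x, g (f^[k] x) ∂μ = ∫ x, g x ∂μ := by
    rw [← integral_map (hf.iterate k).measurable.aemeasurable, (hf.iterate k).map_eq]
    rw [(hf.iterate k).map_eq]
    exact hg.aestronglyMeasurable
  have hint (k : ℕ) : Integrable (fun x => g (f^[k] x)) μ :=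
    (hf.iterate k).integrable_comp_of_integrable hg
  simp only [birkhoffAverage, birkhoffSum]
  rw [integral_smul, integral_finsetSum _ fun k _ => hint k]
  simp only [hcomp, Finset.sum_const, Finset.card_range]
  rw [← Nat.cast_smul_eq_nsmul ℝ, smul_smul, inv_mul_cancel₀ (by exact_mod_cast hn), one_smul]

theorem integral_eq_zero_of_tendsto_birkhoffAverage [IsFiniteMeasure μ]
    (hf : MeasurePreserving f μ μ) (hg : AEStronglyMeasurable g μ) {C : ℝ} (hC : 0 ≤ C)
    (hgC : ∀ x, ‖g x‖ ≤ C)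
    (hlim : ∀ᵐ x ∂μ, Tendsto (fun n => birkhoffAverage ℝ f g n x) atTop (𝓝 0)) :
    ∫ x, g x ∂μ = 0 := by
  have hg_int : Integrable g μ := .of_bound hg C (.of_forall hgC)
  have hdom := tendsto_integral_of_dominated_convergence (fun _ => C)
    (fun n => (hf.integrable_birkhoffAverage hg_int n).aestronglyMeasurable)
    (integrable_const C) (fun n => .of_forall (norm_birkhoffAverage_le f hC hgC n)) hlim
  rw [integral_zero] at hdom
  refine tendsto_nhds_unique (tendsto_const_nhds.congr' ?_) hdom
  filter_upwards [eventually_ne_atTop 0] with n hn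
  exact (hf.integral_birkhoffAverage hg_int hn).symm

end MeasureTheory.MeasurePreserving

theorem ContinuousLinearMap.sum_norm_apply_le {𝕜 E ι : Type*} [RCLike 𝕜]
    [SeminormedAddCommGroup E] [NormedSpace 𝕜 E] (ψ : E →L[𝕜] 𝕜) (s : Finset ι) (u : ι → E)
    {B : ℝ} (hB : ∀ c : ι → 𝕜, (∀ i, ‖c i‖ ≤ 1) → ‖∑ i ∈ s, c i • u i‖ ≤ B) :
    ∑ i ∈ s, ‖ψ (u i)‖ ≤ ‖ψ‖ * B := by
  -- `c i` rotates `ψ (u i)` onto `[0, ∞)`; it is `0` when `ψ (u i) = 0`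
  set c : ι → 𝕜 := fun i => star (ψ (u i)) / ‖ψ (u i)‖
  have hc (i : ι) : ‖c i‖ ≤ 1 := by
    simpa [c] using div_self_le_one ‖ψ (u i)‖
  have hcψ (i : ι) : c i * ψ (u i) = ‖ψ (u i)‖ := by
    rcases eq_or_ne (ψ (u i)) 0 with h | h
    · simp [c, h]
    · rw [div_mul_eq_mul_div, RCLike.star_def, RCLike.conj_mul]
      field_simp [h]
  calc ∑ i ∈ s, ‖ψ (u i)‖ = RCLike.re (ψ (∑ i ∈ s, c i • u i)) := by
        simp [map_sum, hcψ]
    _ ≤ ‖ψ (∑ i ∈ s, c i • u i)‖ := RCLike.re_le_norm _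
    _ ≤ ‖ψ‖ * ‖∑ i ∈ s, c i • u i‖ := ψ.le_opNorm _
    _ ≤ ‖ψ‖ * B := by gcongr; exact hB c hc

section OrbitAverages

variable {K : Type*} [TopologicalSpace K]

theorem birkhoffAverage_evalCLM_apply (φ : K → K) (n : ℕ) (x : K) (h : C(K, ℝ)) :
    birkhoffAverage ℝ φ (ContinuousMap.evalCLM ℝ) n x h = birkhoffAverage ℝ φ h n x := by
  simp [birkhoffAverage, birkhoffSum]

variable [CompactSpace K]

theorem norm_birkhoffAverage_evalCLM_le (φ : K → K) (n : ℕ) (x : K) :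
    ‖birkhoffAverage ℝ φ (ContinuousMap.evalCLM ℝ (M := ℝ)) n x‖ ≤ 1 :=
  ContinuousLinearMap.opNorm_le_bound _ zero_le_one fun h => by
    rw [birkhoffAverage_evalCLM_apply, one_mul]
    exact norm_birkhoffAverage_le φ (norm_nonneg h) h.norm_coe_le_norm n x

theorem ContinuousLinearMap.average_norm_apply_comp_iterate_le {𝕜 : Type*} [RCLike 𝕜]
    (ψ : C(K, 𝕜) →L[𝕜] 𝕜) (f : C(K, 𝕜)) {φ : K → K} (hφ : Continuous φ) (N : ℕ) {δ : ℝ}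
    (hδ : 0 ≤ δ) (hf : ∀ x, birkhoffAverage ℝ φ (fun y => ‖f y‖) N x ≤ δ) :
    (1 / (N : ℝ)) * ∑ n ∈ Finset.range N, ‖ψ (f.comp ⟨φ^[n], hφ.iterate n⟩)‖ ≤ ‖ψ‖ * δ := by
  rcases N.eq_zero_or_pos with rfl | hN
  · simpa using mul_nonneg (norm_nonneg ψ) hδ
  have hN' : (0 : ℝ) < N := by exact_mod_cast hN
  have hsum : ∑ n ∈ Finset.range N, ‖ψ (f.comp ⟨φ^[n], hφ.iterate n⟩)‖ ≤ ‖ψ‖ * (N * δ) :=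
    ψ.sum_norm_apply_le _ _ fun c hc => (ContinuousMap.norm_le _ (by positivity)).mpr fun x =>
      calc ‖(∑ n ∈ Finset.range N, c n • f.comp ⟨φ^[n], hφ.iterate n⟩) x‖
          = ‖∑ n ∈ Finset.range N, c n * f (φ^[n] x)‖ := by simp
        _ ≤ ∑ n ∈ Finset.range N, ‖f (φ^[n] x)‖ := (norm_sum_le _ _).trans <|
            Finset.sum_le_sum fun n _ => by
              rw [norm_mul]
              exact mul_le_of_le_one_left (norm_nonneg _) (hc n)
        _ = N * birkhoffAverage ℝ φ (fun y => ‖f y‖) N x := by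
            simp [birkhoffAverage, birkhoffSum, hN'.ne']
        _ ≤ N * δ := by gcongr; exact hf x
  calc (1 / (N : ℝ)) * ∑ n ∈ Finset.range N, ‖ψ (f.comp ⟨φ^[n], hφ.iterate n⟩)‖
      ≤ (1 / N) * (‖ψ‖ * (N * δ)) := by gcongr
    _ = ‖ψ‖ * δ := by field_simp

variable [T2Space K] [MeasurableSpace K] [BorelSpace K]

theorem exists_invariant_regular_probabilityMeasure_of_functional {φ : K → K}
    (hφ : Continuous φ) (ℓ : C(K, ℝ) →L[ℝ] ℝ) (hpos : ∀ h, 0 ≤ h → 0 ≤ ℓ h) (hone : ℓ 1 = 1)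
    (hinv : ∀ h : C(K, ℝ), ℓ (h.comp ⟨φ, hφ⟩) = ℓ h) :
    ∃ μ : Measure K, IsProbabilityMeasure μ ∧ μ.Regular ∧ μ.map φ = μ ∧
      ∀ h : C(K, ℝ), ∫ x, h x ∂μ = ℓ h := by
  let Λ : C_c(K, ℝ) →ₚ[ℝ] ℝ := .mk₀
    { toFun h := ℓ h.toContinuousMap
      map_add' _ _ := ℓ.map_add _ _
      map_smul' _ _ := ℓ.map_smul _ _ }
    fun h hh => hpos _ hh
  set μ := RealRMK.rieszMeasure Λ
  have hμ (h : C(K, ℝ)) : ∫ x, h x ∂μ = ℓ h :=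
    RealRMK.integral_rieszMeasure Λ (CompactlySupportedContinuousMap.continuousMapEquiv h)
  have : IsProbabilityMeasure μ := by
    refine ⟨(ENNReal.toReal_eq_one_iff _).mp ?_⟩
    rw [← measureReal_def]
    simpa [hone] using hμ 1
  have : (μ.map φ).InnerRegularCompactLTTop :=
    Measure.InnerRegularCompactLTTop.map_of_continuous hφ
  refine ⟨μ, inferInstance, inferInstance, ?_, hμ⟩
  refine Measure.ext_of_integral_eq_on_compactlySupported fun h => ?_
  calc ∫ x, h x ∂μ.map φ = ∫ x, h (φ x) ∂μ :=
        integral_map hφ.aemeasurable (map_continuous h).aestronglyMeasurable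
    _ = ∫ x, h x ∂μ := (hμ (h.toContinuousMap.comp ⟨φ, hφ⟩)).trans ((hinv _).trans (hμ _).symm)

theorem eventually_birkhoffAverage_lt {φ : K → K} (hφ : Continuous φ) (g : C(K, ℝ)) {c : ℝ}
    (hg : ∀ μ : Measure K, IsProbabilityMeasure μ → μ.Regular → μ.map φ = μ →
      ∫ x, g x ∂μ < c) :
    ∀ᶠ N in atTop, ∀ x, birkhoffAverage ℝ φ g N x < c := by
  by_contra hfreq
  simp only [not_eventually, not_forall, not_lt] at hfreq
  set F := comap Prod.fst atTop ⊓ 𝓟 {p : ℕ × K | c ≤ birkhoffAverage ℝ φ g p.1 p.2}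
  have : F.NeBot := frequently_iff_neBot.mp <|
    frequently_comap.mpr <| hfreq.mono fun N ⟨x, hx⟩ => ⟨(N, x), rfl, hx⟩
  have hF : Tendsto Prod.fst F atTop := tendsto_comap.mono_left inf_le_left
  let Λ : ℕ × K → WeakDual ℝ C(K, ℝ) := fun p =>
    StrongDual.toWeakDual (birkhoffAverage ℝ φ (ContinuousMap.evalCLM ℝ) p.1 p.2)
  have hΛ (p : ℕ × K) (h : C(K, ℝ)) : Λ p h = birkhoffAverage ℝ φ h p.1 p.2 :=
    birkhoffAverage_evalCLM_apply φ p.1 p.2 h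
  obtain ⟨ℓ, -, hℓ⟩ := (WeakDual.isCompact_closedBall (0 : StrongDual ℝ C(K, ℝ)) 1)
    |>.exists_mapClusterPt (f := F) (u := Λ) (tendsto_principal.mpr <| .of_forall fun p => by
      simpa [Λ] using norm_birkhoffAverage_evalCLM_le φ p.1 p.2)
  have hmem {P : Set ℝ} (hP : IsClosed P) {h : C(K, ℝ)}
      (hev : ∀ᶠ p in F, birkhoffAverage ℝ φ h p.1 p.2 ∈ P) : ℓ h ∈ P :=
    (hP.preimage (WeakDual.eval_continuous h)).mem_of_mapClusterPt hℓ (by simpa [hΛ] using hev)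
  have hpos (h : C(K, ℝ)) (hh : 0 ≤ h) : 0 ≤ ℓ h :=
    hmem isClosed_Ici (.of_forall fun p => birkhoffAverage_nonneg φ hh p.1 p.2)
  have hone : ℓ 1 = 1 := by
    refine hmem isClosed_singleton ?_
    filter_upwards [hF.eventually_ne_atTop 0] with p hp
    simp [birkhoffAverage, birkhoffSum, hp]
  have hinv (h : C(K, ℝ)) : ℓ (h.comp ⟨φ, hφ⟩) = ℓ h := by
    have hcl : MapClusterPt (ℓ (h.comp ⟨φ, hφ⟩) - ℓ h) F
        (fun p => Λ p (h.comp ⟨φ, hφ⟩) - Λ p h) :=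
      hℓ.continuousAt_comp
        ((WeakDual.eval_continuous _).sub (WeakDual.eval_continuous h)).continuousAt
    have hbound : Tendsto (fun p : ℕ × K => 2 * ‖h‖ / p.1) F (𝓝 0) :=
      (tendsto_const_div_atTop_nhds_zero_nat _).comp hF
    refine sub_eq_zero.mp (hcl.eq_of_tendsto (squeeze_zero_norm (fun p => ?_) hbound))
    rw [hΛ, hΛ, ← dist_eq_norm, show ⇑(h.comp ⟨φ, hφ⟩) = h ∘ φ from rfl,
      birkhoffAverage_comp_apply, dist_birkhoffAverage_apply_birkhoffAverage]
    gcongr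
    exact h.dist_le_two_norm _ _
  obtain ⟨μ, hμ, hμreg, hμinv, hμℓ⟩ :=
    exists_invariant_regular_probabilityMeasure_of_functional hφ (WeakDual.toStrongDual ℓ)
      hpos hone hinv
  refine (hg μ hμ hμreg hμinv).not_ge ?_
  rw [hμℓ]
  exact hmem isClosed_Ici (eventually_inf_principal.mpr (.of_forall fun p hp => hp))

end OrbitAverages

/-- For the Koopman operator of a continuous map `φ` and `f ∈ C(K, ℂ)`:
`∫ |f| dμ = 0` for every `φ`-invariant regular Borel probability measure `μ` iff the
Cesàro averages `(1/N) ∑_{n<N} |⟨T_φ^n f, ν⟩|` tend to `0` for every `ν ∈ C(K)'`. -/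
theorem stmt11 {K : Type} [TopologicalSpace K] [CompactSpace K] [T2Space K]
    [MeasurableSpace K] [BorelSpace K]
    (φ : K → K) (hφ : Continuous φ) (f : C(K, ℂ)) :
    (∀ μ : Measure K, IsProbabilityMeasure μ → μ.Regular → μ.map φ = μ →
        ∫ x, ‖f x‖ ∂μ = 0) ↔
      ∀ ψ : C(K, ℂ) →L[ℂ] ℂ,
        Tendsto
          (fun N : ℕ => (1 / (N : ℝ)) * ∑ n ∈ Finset.range N,
            ‖ψ (f.comp ⟨φ^[n], hφ.iterate n⟩)‖)
          atTop (nhds (0 : ℝ)) := by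
  constructor
  · intro hf ψ
    refine tendsto_order.mpr ⟨fun a ha => .of_forall fun N => ha.trans_le (by positivity),
      fun a ha => ?_⟩
    set δ := a / (‖ψ‖ + 1)
    have hδ : 0 < δ := by positivity
    filter_upwards [eventually_birkhoffAverage_lt hφ ⟨fun x => ‖f x‖, by fun_prop⟩
      fun μ hμ hreg hinv => (hf μ hμ hreg hinv).trans_lt hδ] with N hN
    calc _ ≤ ‖ψ‖ * δ := ψ.average_norm_apply_comp_iterate_le f hφ N hδ.le fun x => (hN x).le
      _ < a := by
        rw [mul_div_assoc', div_lt_iff₀ (by positivity)]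
        nlinarith [norm_nonneg ψ]
  · intro hψ μ _ _ hinv
    refine MeasurePreserving.integral_eq_zero_of_tendsto_birkhoffAverage ⟨hφ.measurable, hinv⟩
      (by fun_prop : Continuous fun x => ‖f x‖).aestronglyMeasurable (norm_nonneg f)
      (fun x => by simpa using f.norm_coe_le_norm x) (.of_forall fun x => ?_)
    simpa [birkhoffAverage, birkhoffSum] using hψ (ContinuousMap.evalCLM ℂ x)
end

section
/- Let K be a compact Hausdorff space, S a right amenable semigroup of Markov operators on C(K), μ an S-invariant probability measure, and L ⊆ K a self-supporting closed set. Then the indicator function 1_L is a fixed point of every induced operator S_μ on L¹(K,μ). -/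
open MeasureTheory Filter
open scoped NNReal ENNReal Classical Topology

/-!
Approximate `1_L` in `L¹(μ)` by continuous `g` with `0 ≤ g` and `g = 1` on `L`: by outer
regularity and Urysohn's lemma such `g` exist with `∫ g` arbitrarily close to `μ L`. For every
such `g` one has `‖g - 1_L‖₁ = ∫ g - μ L`, so `g → 1_L` exactly when `∫ g → μ L`. A Markov
operator `T` keeps `g` in this class (`1 - g` vanishes on the self-supporting set `L`, hence so
does `T (1 - g) = 1 - T g`), and invariance of `μ` gives `∫ T g = ∫ g`. Thus both `g` and `T g`
converge to `1_L`, and continuity of the induced operator `S_μ` gives `S_μ 1_L = 1_L`.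
-/

section IndicatorApproximation

variable {K : Type*} [TopologicalSpace K] [MeasurableSpace K]
  (μ : Measure K) [IsFiniteMeasure μ] {L : Set K}

theorem norm_toLp_sub_indicatorConstLp [CompactSpace K] [BorelSpace K] (hL : MeasurableSet L)
    {g : C(K, ℝ)} (hg₀ : 0 ≤ g) (hg₁ : Set.EqOn g 1 L) :
    ‖ContinuousMap.toLp 1 μ ℝ g - indicatorConstLp 1 hL (measure_ne_top μ L) (1 : ℝ)‖ =
      ∫ x, g x ∂μ - μ.real L := by
  have hae : ⇑(ContinuousMap.toLp 1 μ ℝ g - indicatorConstLp 1 hL (measure_ne_top μ L) (1 : ℝ))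
      =ᵐ[μ] fun x => g x - L.indicator 1 x := by
    filter_upwards [Lp.coeFn_sub (ContinuousMap.toLp 1 μ ℝ g) _,
      ContinuousMap.coeFn_toLp (p := 1) μ (𝕜 := ℝ) g,
      indicatorConstLp_coeFn (p := 1) (hs := hL) (hμs := measure_ne_top μ L) (c := (1 : ℝ))]
      with x hsub hg hind
    rw [hsub, Pi.sub_apply, hg, hind]
    rfl
  have hnonneg : ∀ x, 0 ≤ g x - L.indicator 1 x := fun x => by
    by_cases hx : x ∈ L
    · simp [hx, hg₁ hx]
    · simpa [hx] using hg₀ x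
  have hg_int : Integrable g μ :=
    g.continuous.integrable_of_hasCompactSupport (HasCompactSupport.of_compactSpace _)
  rw [L1.norm_eq_integral_norm]
  calc _ = ∫ x, (g x - L.indicator 1 x) ∂μ :=
        integral_congr_ae (hae.mono fun x hx => by rw [hx, Real.norm_of_nonneg (hnonneg x)])
    _ = ∫ x, g x ∂μ - μ.real L := by
        have hind_int : Integrable (L.indicator (1 : K → ℝ)) μ :=
          (integrable_const 1).indicator hL
        rw [integral_sub hg_int hind_int, integral_indicator_one hL]

theorem tendsto_toLp_indicatorConstLp [CompactSpace K] [BorelSpace K] (hL : MeasurableSet L)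
    {ι : Type*} {l : Filter ι} {g : ι → C(K, ℝ)} (hg₀ : ∀ i, 0 ≤ g i)
    (hg₁ : ∀ i, Set.EqOn (g i) 1 L)
    (hint : Tendsto (fun i => ∫ x, g i x ∂μ) l (𝓝 (μ.real L))) :
    Tendsto (fun i => ContinuousMap.toLp 1 μ ℝ (g i)) l
      (𝓝 (indicatorConstLp 1 hL (measure_ne_top μ L) (1 : ℝ))) := by
  rw [tendsto_iff_norm_sub_tendsto_zero]
  simp only [norm_toLp_sub_indicatorConstLp μ hL (hg₀ _) (hg₁ _)]
  simpa using hint.sub_const (μ.real L)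

theorem IsClosed.exists_continuousMap_eqOn_one_integral_lt [NormalSpace K] [μ.OuterRegular]
    (hL : IsClosed L) {ε : ℝ} (hε : 0 < ε) :
    ∃ g : C(K, ℝ), 0 ≤ g ∧ Set.EqOn g 1 L ∧ ∫ x, g x ∂μ < μ.real L + ε := by
  obtain ⟨U, hLU, hU, hμU⟩ :=
    L.exists_isOpen_lt_add (μ := μ) (measure_ne_top μ L) (ENNReal.ofReal_pos.2 hε).ne'
  obtain ⟨g, hgU, hgL, hg⟩ := exists_continuous_zero_one_of_isClosed hU.isClosed_compl hL
    (Set.disjoint_compl_left_iff_subset.2 hLU)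
  refine ⟨g, fun x => (hg x).1, hgL, ?_⟩
  have hint : ENNReal.ofReal (∫ x, g x ∂μ) < ENNReal.ofReal (μ.real L + ε) := by
    rw [ENNReal.ofReal_add measureReal_nonneg hε.le, ofReal_measureReal]
    exact (integral_le_measure (fun x _ => (hg x).2) fun x hx => (hgU hx).le).trans_lt hμU
  exact (ENNReal.ofReal_lt_ofReal_iff_of_nonneg (integral_nonneg fun x => (hg x).1)).1 hint

theorem IsClosed.exists_seq_continuousMap_eqOn_one_tendsto_integral [CompactSpace K]
    [BorelSpace K] [NormalSpace K] [μ.OuterRegular] (hL : IsClosed L) :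
    ∃ g : ℕ → C(K, ℝ), (∀ n, 0 ≤ g n) ∧ (∀ n, Set.EqOn (g n) 1 L) ∧
      Tendsto (fun n => ∫ x, g n x ∂μ) atTop (𝓝 (μ.real L)) := by
  choose g hg₀ hg₁ hlt using fun n : ℕ =>
    hL.exists_continuousMap_eqOn_one_integral_lt μ (Nat.one_div_pos_of_nat (n := n))
  refine ⟨g, hg₀, hg₁, tendsto_of_tendsto_of_tendsto_of_le_of_le tendsto_const_nhds
    (by simpa using tendsto_one_div_add_atTop_nhds_zero_nat.const_add (μ.real L))
    (fun n => ?_) (fun n => (hlt n).le)⟩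
  have := norm_toLp_sub_indicatorConstLp μ hL.measurableSet (hg₀ n) (hg₁ n)
  linarith [norm_nonneg (ContinuousMap.toLp 1 μ ℝ (g n) -
    indicatorConstLp 1 hL.measurableSet (measure_ne_top μ L) (1 : ℝ))]

end IndicatorApproximation

theorem SelfSupporting.eqOn_one_apply {K : Type} [TopologicalSpace K] [CompactSpace K]
    {𝒮 : Set (Module.End ℝ C(K, ℝ))} {L : Set K} (hL : SelfSupporting 𝒮 L)
    {T : Module.End ℝ C(K, ℝ)} (hT : T ∈ 𝒮) (hTm : IsMarkov T) {g : C(K, ℝ)}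
    (hg : Set.EqOn g 1 L) : Set.EqOn (T g) 1 L := by
  intro x hx
  have h : T (1 - g) x = 0 := hL.2.2 T hT x hx _ fun y hy => by simp [hg hy]
  rw [map_sub, hTm.2, ContinuousMap.sub_apply, ContinuousMap.one_apply, sub_eq_zero] at h
  exact h.symm

theorem stmt15_general {K : Type} [TopologicalSpace K] [CompactSpace K] [T2Space K]
    [MeasurableSpace K] [BorelSpace K]
    (𝒮 : Subsemigroup (Module.End ℝ C(K, ℝ))) (hMarkov : ∀ T ∈ 𝒮, IsMarkov T)
    (μ : Measure K) [IsProbabilityMeasure μ]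
    (hμ : InvProb (𝒮 : Set (Module.End ℝ C(K, ℝ))) μ)
    (L : Set K) (hL : SelfSupporting (𝒮 : Set (Module.End ℝ C(K, ℝ))) L)
    (Φ : ∀ T ∈ 𝒮, Lp ℝ 1 μ →L[ℝ] Lp ℝ 1 μ)
    (hΦ : ∀ T (hT : T ∈ 𝒮) (f : C(K, ℝ)),
      Φ T hT (ContinuousMap.toLp 1 μ ℝ f) = ContinuousMap.toLp 1 μ ℝ (T f)) :
    ∀ T (hT : T ∈ 𝒮),
      Φ T hT (indicatorConstLp 1 hL.2.1.measurableSet (measure_ne_top μ L) (1 : ℝ)) =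
        indicatorConstLp 1 hL.2.1.measurableSet (measure_ne_top μ L) (1 : ℝ) := by
  intro T hT
  have : μ.Regular := hμ.2.1
  obtain ⟨g, hg₀, hg₁, hint⟩ := hL.2.1.exists_seq_continuousMap_eqOn_one_tendsto_integral μ
  have hTg₀ : ∀ n, 0 ≤ T (g n) := fun n => (hMarkov T hT).1 _ (hg₀ n)
  have hTg₁ : ∀ n, Set.EqOn (T (g n)) 1 L :=
    fun n => hL.eqOn_one_apply hT (hMarkov T hT) (hg₁ n)
  have hTint : Tendsto (fun n => ∫ x, T (g n) x ∂μ) atTop (𝓝 (μ.real L)) := by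
    simpa only [hμ.2.2 T hT] using hint
  have hlim := tendsto_toLp_indicatorConstLp μ hL.2.1.measurableSet hg₀ hg₁ hint
  refine tendsto_nhds_unique ?_ (tendsto_toLp_indicatorConstLp μ _ hTg₀ hTg₁ hTint)
  simpa only [Function.comp_def, hΦ] using ((Φ T hT).continuous.tendsto _).comp hlim

/-- For any invariant probability measure `μ` and any self-supporting closed set `L`,
the indicator `1_L` is fixed by every induced operator on `L¹(K, μ)`. -/
theorem stmt15 {K : Type} [TopologicalSpace K] [CompactSpace K] [T2Space K]
    [MeasurableSpace K] [BorelSpace K]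
    (𝒮 : Subsemigroup (Module.End ℝ C(K, ℝ))) (hMarkov : ∀ T ∈ 𝒮, IsMarkov T)
    (ham : RightAmenable 𝒮)
    (μ : Measure K) [IsProbabilityMeasure μ]
    (hμ : InvProb (𝒮 : Set (Module.End ℝ C(K, ℝ))) μ)
    (L : Set K) (hL : SelfSupporting (𝒮 : Set (Module.End ℝ C(K, ℝ))) L)
    (Φ : ∀ T ∈ 𝒮, Lp ℝ 1 μ →L[ℝ] Lp ℝ 1 μ)
    (hΦ : ∀ T (hT : T ∈ 𝒮) (f : C(K, ℝ)),
      Φ T hT (ContinuousMap.toLp 1 μ ℝ f) = ContinuousMap.toLp 1 μ ℝ (T f)) :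
    ∀ T (hT : T ∈ 𝒮),
      Φ T hT (indicatorConstLp 1 hL.2.1.measurableSet (measure_ne_top μ L) (1 : ℝ)) =
        indicatorConstLp 1 hL.2.1.measurableSet (measure_ne_top μ L) (1 : ℝ) :=
  stmt15_general 𝒮 hMarkov μ hμ L hL Φ hΦ
end

section
/- Let K be a compact Hausdorff space and S a right amenable semigroup of Markov operators on C(K). The map A ↦ hull(ker(A)) on subsets of the primitive spectrum Prim(S), where ker(A) = ⋂_{p∈A} p and hull(I) = {p ∈ Prim(S) : I ⊆ p}, is a Kuratowski closure operator; in particular hull(ker(A₁ ∪ A₂)) = hull(ker(A₁)) ∪ hull(ker(A₂)). -/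
/-!
For ergodic `μ`, the primitive ideal `I_μ` consists of the functions vanishing on `supp μ`. Hence
`ker A` is the ideal of functions vanishing on the closure `Z_A` of the union of the supports of
the measures in `A`, and `ker A ⊆ I_μ` iff `supp μ ⊆ Z_A` (Urysohn). The first three axioms are
formal properties of the hull–kernel Galois connection. For additivity, `Z_{A ∪ B} = Z_A ∪ Z_B`.
Markov operators preserve the functions vanishing on the support of an invariant measure, so each
`Z_A` is self-supporting, and the restriction of an invariant measure to a closed self-supporting
set is again invariant (outer regularity and Urysohn). An ergodic `μ` therefore gives `Z_A`
measure `0` or `1`, and `supp μ ⊆ Z_A ∪ Z_B` lies in whichever of the two has full measure.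
-/

open MeasureTheory Filter
open scoped NNReal ENNReal Classical Topology

/-- The hull of a set of functions: all primitive `𝒮`-ideals containing it. -/
def hullOf {K : Type} [TopologicalSpace K] [CompactSpace K] [MeasurableSpace K]
    (𝒮 : Set (Module.End ℝ C(K, ℝ))) (I : Set C(K, ℝ)) : Set (Set C(K, ℝ)) :=
  {p : Set C(K, ℝ) | IsPrimitive 𝒮 p ∧ I ⊆ p}


open ProbabilityTheory ContinuousMap

lemma measure_support_eq_one {X : Type*} [TopologicalSpace X] [MeasurableSpace X]
    [OpensMeasurableSpace X] (μ : Measure X) [IsProbabilityMeasure μ] [μ.Regular] :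
    μ μ.support = 1 :=
  (prob_compl_eq_zero_iff μ.isClosed_support.measurableSet).mp μ.measure_compl_support_of_regular

section Support

variable {K : Type} [TopologicalSpace K] [CompactSpace K] [MeasurableSpace K]

lemma ContinuousMap.integrable [OpensMeasurableSpace K] {E : Type*} [NormedAddCommGroup E]
    [SecondCountableTopology E] (f : C(K, E)) (μ : Measure K) [IsFiniteMeasure μ] :
    Integrable f μ :=
  f.continuous.integrable_of_hasCompactSupport (HasCompactSupport.of_compactSpace _)

lemma absKernel_eq_idealOfSet [OpensMeasurableSpace K] (μ : Measure K) [IsFiniteMeasure μ]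
    [μ.Regular] : absKernel μ = idealOfSet ℝ μ.supportᶜ := by
  ext f
  rw [absKernel, Set.mem_ofPred_eq, SetLike.mem_coe, mem_idealOfSet,
    integral_eq_zero_iff_of_nonneg (fun x => abs_nonneg (f x)) (f.integrable μ).abs]
  simp only [compl_compl]
  constructor
  · intro hf x hx
    by_contra hfx
    have hnull : μ {y | f y ≠ 0} = 0 := by
      rw [EventuallyEq, ae_iff] at hf
      simpa only [Pi.zero_apply, abs_eq_zero] using hf
    exact (((μ.mem_support_iff_forall x).mp hx) _
      ((isOpen_ne.preimage f.continuous).mem_nhds hfx)).ne' hnull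
  · intro hf
    filter_upwards [μ.support_mem_ae_of_regular] with x hx
    simp [hf hx]

lemma mem_absKernel_iff [OpensMeasurableSpace K] (μ : Measure K) [IsFiniteMeasure μ]
    [μ.Regular] {f : C(K, ℝ)} : f ∈ absKernel μ ↔ Set.EqOn f 0 μ.support := by
  rw [absKernel_eq_idealOfSet, SetLike.mem_coe, mem_idealOfSet, compl_compl]
  rfl

lemma one_notMem_absKernel (μ : Measure K) [IsProbabilityMeasure μ] :
    (1 : C(K, ℝ)) ∉ absKernel μ := by
  simp [absKernel]

end Support

lemma idealOfSet_compl_le_iff {K : Type} [TopologicalSpace K] [CompactSpace K] [T2Space K]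
    {Z Z' : Set K} (hZ : IsClosed Z) : idealOfSet ℝ Zᶜ ≤ idealOfSet ℝ Z'ᶜ ↔ Z' ⊆ Z := by
  rw [← (ideal_gc K ℝ).le_iff_le, setOfIdeal_ofSet_of_isOpen ℝ hZ.isOpen_compl]
  exact Set.compl_subset_compl

section Markov

variable {K : Type} [TopologicalSpace K] [CompactSpace K]

lemma IsMarkov.monotone {T : Module.End ℝ C(K, ℝ)} (hT : IsMarkov T) : Monotone T := by
  intro f g hfg
  have := hT.1 (g - f) (sub_nonneg.mpr hfg)
  rwa [map_sub, sub_nonneg] at this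

lemma IsMarkov.abs_le {T : Module.End ℝ C(K, ℝ)} (hT : IsMarkov T) (f : C(K, ℝ)) :
    |T f| ≤ T |f| :=
  abs_le'.mpr
    ⟨hT.monotone (le_abs_self f), by simpa only [map_neg] using hT.monotone (neg_le_abs f)⟩

lemma SelfSupporting.closure_sUnion {𝒮 : Set (Module.End ℝ C(K, ℝ))} {𝒵 : Set (Set K)}
    (h𝒵 : ∀ Z ∈ 𝒵, SelfSupporting 𝒮 Z) (hne : (⋃₀ 𝒵).Nonempty) :
    SelfSupporting 𝒮 (closure (⋃₀ 𝒵)) := by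
  refine ⟨hne.closure, isClosed_closure, fun T hT x hx f hf => ?_⟩
  have hvan : Set.EqOn (T f) 0 (⋃₀ 𝒵) := by
    rintro y ⟨Z, hZ, hy⟩
    exact (h𝒵 Z hZ).2.2 T hT y hy f fun z hz => hf z (subset_closure ⟨Z, hZ, hz⟩)
  exact hvan.closure (T f).continuous continuous_zero hx

variable [MeasurableSpace K] [OpensMeasurableSpace K] {𝒮 : Set (Module.End ℝ C(K, ℝ))}

lemma selfSupporting_support (hM : ∀ T ∈ 𝒮, IsMarkov T) {μ : Measure K} (hμ : InvProb 𝒮 μ) :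
    SelfSupporting 𝒮 μ.support := by
  obtain ⟨hprob, hreg, hinv⟩ := hμ
  refine ⟨?_, μ.isClosed_support, fun T hT x hx f hf => ?_⟩
  · exact nonempty_of_measure_ne_zero (measure_support_eq_one μ ▸ one_ne_zero)
  have hTabs : T |f| ∈ absKernel μ := by
    have hnn : 0 ≤ T |f| := (hM T hT).1 _ (abs_nonneg f)
    have hf0 : ∫ x, |f x| ∂μ = 0 := (mem_absKernel_iff μ).mpr hf
    calc ∫ x, |(T |f|) x| ∂μ = ∫ x, (T |f|) x ∂μ := by
          congr 1 with x
          exact abs_of_nonneg (hnn x)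
      _ = 0 := by simpa only [hinv T hT |f|, ContinuousMap.abs_apply] using hf0
  have hle : |T f x| ≤ (T |f|) x := (hM T hT).abs_le f x
  exact abs_nonpos_iff.mp (hle.trans_eq ((mem_absKernel_iff μ).mp hTabs hx))

end Markov

section RestrictedInvariance

variable {K : Type} [TopologicalSpace K] [CompactSpace K] [MeasurableSpace K]
  [OpensMeasurableSpace K] {𝒮 : Set (Module.End ℝ C(K, ℝ))}

lemma integral_map_eq_of_integral_map_le (μ : Measure K)
    [IsFiniteMeasure μ] {T : Module.End ℝ C(K, ℝ)} (hT1 : T 1 = 1)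
    (h : ∀ g : C(K, ℝ), 0 ≤ g → ∫ x, T g x ∂μ ≤ ∫ x, g x ∂μ) (f : C(K, ℝ)) :
    ∫ x, T f x ∂μ = ∫ x, f x ∂μ := by
  have hshift : ∀ g : C(K, ℝ), ∫ x, (‖f‖ • 1 + g) x ∂μ = μ.real Set.univ * ‖f‖ + ∫ x, g x ∂μ := by
    intro g
    simp [integral_add (integrable_const _) (g.integrable μ)]
  have hT : ∀ g : C(K, ℝ), T (‖f‖ • 1 + g) = ‖f‖ • 1 + T g := by
    intro g
    rw [map_add, map_smul, hT1]
  have hle : ∀ g : C(K, ℝ), 0 ≤ ‖f‖ • 1 + g → ∫ x, T g x ∂μ ≤ ∫ x, g x ∂μ := by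
    intro g hg
    have := h _ hg
    rwa [hT, hshift, hshift, add_le_add_iff_left] at this
  have hbound : ∀ x, |f x| ≤ ‖f‖ := f.norm_coe_le_norm
  have h₁ := hle f <| ContinuousMap.le_def.mpr fun x => by
    simp only [ContinuousMap.zero_apply, ContinuousMap.add_apply, ContinuousMap.smul_apply,
      ContinuousMap.one_apply, smul_eq_mul, mul_one]
    linarith [abs_le.mp (hbound x)]
  have h₂ := hle (-f) <| ContinuousMap.le_def.mpr fun x => by
    simp only [ContinuousMap.zero_apply, ContinuousMap.add_apply, ContinuousMap.smul_apply,
      ContinuousMap.one_apply, ContinuousMap.neg_apply, smul_eq_mul, mul_one]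
    linarith [abs_le.mp (hbound x)]
  simp only [map_neg, ContinuousMap.neg_apply, integral_neg, neg_le_neg_iff] at h₂
  exact le_antisymm h₁ h₂

variable [T2Space K] {ν : Measure K} [IsFiniteMeasure ν] {L : Set K}
  {T : Module.End ℝ C(K, ℝ)}

lemma setIntegral_map_le_add (hν : IsInvariantM 𝒮 ν) (hT : T ∈ 𝒮) (hM : IsMarkov T)
    (hL : SelfSupporting 𝒮 L) {g : C(K, ℝ)} (hg : 0 ≤ g) {U : Set K} (hU : IsOpen U)
    (hLU : L ⊆ U) :
    ∫ x in L, T g x ∂ν ≤ ∫ x in L, g x ∂ν + ‖g‖ * ν.real (U \ L) := by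
  obtain ⟨u, hu0, hu1, hu01⟩ := exists_continuous_zero_one_of_isClosed hU.isClosed_compl hL.2.1
    (Set.disjoint_compl_left_iff_subset.mpr hLU)
  have hug : ∀ x, g x * u x ≤ g x := fun x => mul_le_of_le_one_right (hg x) (hu01 x).2
  have hgu : 0 ≤ g * u := ContinuousMap.le_def.mpr fun x => mul_nonneg (hg x) (hu01 x).1
  have hTg : Set.EqOn (T g) (T (g * u)) L := by
    intro x hx
    have := hL.2.2 T hT x hx (g - g * u) fun y hy => by simp [hu1 hy]
    rwa [map_sub, ContinuousMap.sub_apply, sub_eq_zero] at this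
  have hLm := hL.2.1.measurableSet
  calc ∫ x in L, T g x ∂ν = ∫ x in L, T (g * u) x ∂ν := setIntegral_congr_fun hLm hTg
    _ ≤ ∫ x, T (g * u) x ∂ν :=
      setIntegral_le_integral ((T (g * u)).integrable ν) (.of_forall (hM.1 _ hgu))
    _ = ∫ x, g x * u x ∂ν := hν T hT (g * u)
    _ = ∫ x in U, g x * u x ∂ν :=
      (setIntegral_eq_integral_of_forall_compl_eq_zero fun x hx => by simp [hu0 hx]).symm
    _ ≤ ∫ x in U, g x ∂ν :=
      setIntegral_mono_on ((g * u).integrable ν).integrableOn (g.integrable ν).integrableOn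
        hU.measurableSet fun x _ => hug x
    _ = ∫ x in L, g x ∂ν + ∫ x in U \ L, g x ∂ν := by
      rw [← setIntegral_union Set.disjoint_sdiff_right (hU.measurableSet.diff hLm)
        (g.integrable ν).integrableOn (g.integrable ν).integrableOn, Set.union_sdiff_cancel hLU]
    _ ≤ ∫ x in L, g x ∂ν + ‖g‖ * ν.real (U \ L) := by
      gcongr
      exact (Real.le_norm_self _).trans
        (norm_setIntegral_le_of_norm_le_const (measure_lt_top ν _) fun x _ => g.norm_coe_le_norm x)

lemma setIntegral_map_le [ν.Regular] (hν : IsInvariantM 𝒮 ν) (hT : T ∈ 𝒮) (hM : IsMarkov T)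
    (hL : SelfSupporting 𝒮 L) {g : C(K, ℝ)} (hg : 0 ≤ g) :
    ∫ x in L, T g x ∂ν ≤ ∫ x in L, g x ∂ν := by
  refine le_of_forall_pos_le_add fun ε hε => ?_
  set δ := ε / (‖g‖ + 1)
  have hδ : 0 < δ := by positivity
  obtain ⟨U, hLU, hU, hνU⟩ :=
    Set.exists_isOpen_lt_add L (measure_ne_top ν L) (ENNReal.ofReal_pos.mpr hδ).ne'
  have hdiff : ν.real (U \ L) ≤ δ := by
    rw [measureReal_def, measure_sdiff hLU hL.2.1.measurableSet.nullMeasurableSet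
      (measure_ne_top ν L)]
    exact ENNReal.toReal_le_of_le_ofReal hδ.le (tsub_le_iff_left.mpr hνU.le)
  calc ∫ x in L, T g x ∂ν ≤ ∫ x in L, g x ∂ν + ‖g‖ * ν.real (U \ L) :=
        setIntegral_map_le_add hν hT hM hL hg hU hLU
    _ ≤ ∫ x in L, g x ∂ν + (‖g‖ + 1) * δ := by gcongr; linarith
    _ = ∫ x in L, g x ∂ν + ε := by rw [mul_div_cancel₀ _ (by positivity)]

lemma IsInvariantM.restrict_of_selfSupporting [ν.Regular] (hν : IsInvariantM 𝒮 ν)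
    (hM : ∀ T ∈ 𝒮, IsMarkov T) (hL : SelfSupporting 𝒮 L) : IsInvariantM 𝒮 (ν.restrict L) :=
  fun T hT => integral_map_eq_of_integral_map_le _ (hM T hT).2
    fun _ hg => setIntegral_map_le hν hT (hM T hT) hL hg

end RestrictedInvariance

section Cond

variable {Ω : Type*} [MeasurableSpace Ω] {μ : Measure Ω}

lemma toNNReal_smul_cond [IsFiniteMeasure μ] (s : Set Ω) :
    (μ s).toNNReal • μ[|s] = μ.restrict s := by
  rcases eq_or_ne (μ s) 0 with hs | hs
  · simp [hs, Measure.restrict_eq_zero.mpr hs]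
  rw [ProbabilityTheory.cond, ← smul_assoc, ENNReal.smul_def, smul_eq_mul,
    ENNReal.coe_toNNReal (measure_ne_top μ s), ENNReal.mul_inv_cancel hs (measure_ne_top μ s),
    one_smul]

lemma eq_smul_cond_add_smul_cond_compl [IsProbabilityMeasure μ] {s : Set Ω}
    (hs : MeasurableSet s) :
    μ = (μ s).toNNReal • μ[|s] + (1 - (μ s).toNNReal) • μ[|sᶜ] := by
  have hcompl : 1 - (μ s).toNNReal = (μ sᶜ).toNNReal := by
    rw [prob_compl_eq_one_sub hs, ENNReal.toNNReal_sub (measure_ne_top μ s), ENNReal.toNNReal_one]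
  rw [hcompl, toNNReal_smul_cond s, toNNReal_smul_cond sᶜ, Measure.restrict_add_restrict_compl hs]

end Cond

section Ergodic

variable {K : Type} [TopologicalSpace K] [CompactSpace K] [MeasurableSpace K]
  {𝒮 : Set (Module.End ℝ C(K, ℝ))} {ν : Measure K}

lemma IsInvariantM.smul (hν : IsInvariantM 𝒮 ν) (c : ℝ≥0∞) : IsInvariantM 𝒮 (c • ν) :=
  fun T hT f => by simp only [integral_smul_measure, hν T hT f]

lemma IsInvariantM.restrict_compl [OpensMeasurableSpace K] [IsFiniteMeasure ν]
    (hν : IsInvariantM 𝒮 ν) {s : Set K} (hs : MeasurableSet s)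
    (h : IsInvariantM 𝒮 (ν.restrict s)) : IsInvariantM 𝒮 (ν.restrict sᶜ) := by
  intro T hT f
  have hTf := integral_add_compl hs ((T f).integrable ν)
  have hf := integral_add_compl hs (f.integrable ν)
  linarith [hν T hT f, h T hT f]

lemma InvProb.cond [T2Space K] [BorelSpace K] (hν : InvProb 𝒮 ν) {s : Set K} (hs : ν s ≠ 0)
    (h : IsInvariantM 𝒮 (ν.restrict s)) : InvProb 𝒮 ν[|s] := by
  obtain ⟨hprob, hreg, -⟩ := hν
  have := Measure.Regular.restrict_of_measure_ne_top (μ := ν) (measure_ne_top ν s)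
  exact ⟨cond_isProbabilityMeasure hs, Measure.Regular.smul (ENNReal.inv_ne_top.mpr hs), h.smul _⟩

lemma IsErgodicM.measure_eq_one_of_selfSupporting [T2Space K] [BorelSpace K]
    (hν : IsErgodicM 𝒮 ν) (hM : ∀ T ∈ 𝒮, IsMarkov T) {L : Set K} (hL : SelfSupporting 𝒮 L)
    (h₀ : ν L ≠ 0) : ν L = 1 := by
  obtain ⟨hinv, hext⟩ := hν
  have ⟨hprob, hreg, hinvM⟩ := hinv
  by_contra h₁
  have hLm := hL.2.1.measurableSet
  have hc₀ : ν Lᶜ ≠ 0 := by rwa [Ne, prob_compl_eq_zero_iff hLm]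
  have hres := hinvM.restrict_of_selfSupporting hM hL
  have hcond := hext _ _ (hinv.cond h₀ hres) (hinv.cond hc₀ (hinvM.restrict_compl hLm hres))
    (ν L).toNNReal (ENNReal.toNNReal_pos h₀ (measure_ne_top ν L)) ?_
    (eq_smul_cond_add_smul_cond_compl hLm)
  · have := congrArg (· L) hcond
    simp [cond_apply_self h₀ (measure_ne_top ν L), cond_apply hLm.compl] at this
  · exact ENNReal.toNNReal_lt_of_lt_coe (lt_of_le_of_ne prob_le_one h₁)

end Ergodic

section Hull

variable {K : Type} [TopologicalSpace K] [CompactSpace K] [MeasurableSpace K]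
  {𝒮 : Set (Module.End ℝ C(K, ℝ))}

lemma hullOf_univ : hullOf 𝒮 Set.univ = ∅ := by
  refine Set.eq_empty_of_forall_notMem fun p ⟨⟨μ, hμ, hp⟩, hsub⟩ => ?_
  have := hμ.1.1
  exact one_notMem_absKernel μ (hp ▸ hsub (Set.mem_univ 1))

lemma hullOf_anti {I J : Set C(K, ℝ)} (h : I ⊆ J) : hullOf 𝒮 J ⊆ hullOf 𝒮 I :=
  fun _ hp => ⟨hp.1, h.trans hp.2⟩

lemma subset_hullOf_sInter {A : Set (Set C(K, ℝ))} (hA : A ⊆ {p | IsPrimitive 𝒮 p}) :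
    A ⊆ hullOf 𝒮 (⋂₀ A) :=
  fun _ hp => ⟨hA hp, Set.sInter_subset_of_mem hp⟩

lemma hullOf_sInter_hullOf (I : Set C(K, ℝ)) : hullOf 𝒮 (⋂₀ hullOf 𝒮 I) = hullOf 𝒮 I :=
  (hullOf_anti (Set.subset_sInter fun _ hp => hp.2)).antisymm
    (subset_hullOf_sInter fun _ hp => hp.1)

def ergodicSupport (𝒮 : Set (Module.End ℝ C(K, ℝ))) (A : Set (Set C(K, ℝ))) : Set K :=
  closure (⋃₀ (Measure.support '' {μ | IsErgodicM 𝒮 μ ∧ absKernel μ ∈ A}))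

lemma isClosed_ergodicSupport (A : Set (Set C(K, ℝ))) : IsClosed (ergodicSupport 𝒮 A) :=
  isClosed_closure

lemma ergodicSupport_union (A B : Set (Set C(K, ℝ))) :
    ergodicSupport 𝒮 (A ∪ B) = ergodicSupport 𝒮 A ∪ ergodicSupport 𝒮 B := by
  simp only [ergodicSupport, Set.mem_union, and_or_left, Set.ofPred_or, Set.image_union,
    Set.sUnion_union, closure_union]

variable [OpensMeasurableSpace K] {A : Set (Set C(K, ℝ))}

lemma selfSupporting_ergodicSupport (hM : ∀ T ∈ 𝒮, IsMarkov T)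
    (hne : (ergodicSupport 𝒮 A).Nonempty) : SelfSupporting 𝒮 (ergodicSupport 𝒮 A) := by
  refine SelfSupporting.closure_sUnion ?_ (closure_nonempty_iff.mp hne)
  rintro _ ⟨μ, hμ, rfl⟩
  exact selfSupporting_support hM hμ.1.1

lemma sInter_eq_idealOfSet (hA : A ⊆ {p | IsPrimitive 𝒮 p}) :
    ⋂₀ A = idealOfSet ℝ (ergodicSupport 𝒮 A)ᶜ := by
  ext f
  rw [SetLike.mem_coe, mem_idealOfSet, compl_compl]
  constructor
  · intro hf
    refine Set.EqOn.closure ?_ f.continuous continuous_zero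
    rintro x ⟨_, ⟨μ, ⟨hμ, hμA⟩, rfl⟩, hx⟩
    have := hμ.1.1
    have := hμ.1.2.1
    exact (mem_absKernel_iff μ).mp (hf _ hμA) hx
  · intro hf p hp
    obtain ⟨μ, hμ, rfl⟩ := hA hp
    have := hμ.1.1
    have := hμ.1.2.1
    exact (mem_absKernel_iff μ).mpr fun x hx => hf (subset_closure ⟨_, ⟨μ, ⟨hμ, hp⟩, rfl⟩, hx⟩)

variable [T2Space K]

lemma sInter_subset_absKernel_iff (hA : A ⊆ {p | IsPrimitive 𝒮 p}) (μ : Measure K)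
    [IsFiniteMeasure μ] [μ.Regular] : ⋂₀ A ⊆ absKernel μ ↔ μ.support ⊆ ergodicSupport 𝒮 A := by
  rw [sInter_eq_idealOfSet hA, absKernel_eq_idealOfSet, SetLike.coe_subset_coe,
    idealOfSet_compl_le_iff (isClosed_ergodicSupport A)]

variable [BorelSpace K]

lemma absKernel_mem_hullOf_of_measure_ne_zero (hM : ∀ T ∈ 𝒮, IsMarkov T)
    (hA : A ⊆ {p | IsPrimitive 𝒮 p}) {μ : Measure K} (hμ : IsErgodicM 𝒮 μ)
    (h : μ (ergodicSupport 𝒮 A) ≠ 0) : absKernel μ ∈ hullOf 𝒮 (⋂₀ A) := by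
  have := hμ.1.1
  have := hμ.1.2.1
  have hZ : SelfSupporting 𝒮 (ergodicSupport 𝒮 A) :=
    selfSupporting_ergodicSupport hM (nonempty_of_measure_ne_zero h)
  have hfull := hμ.measure_eq_one_of_selfSupporting hM hZ h
  refine ⟨⟨μ, hμ, rfl⟩, (sInter_subset_absKernel_iff hA μ).mpr ?_⟩
  exact μ.support_subset_of_isClosed (isClosed_ergodicSupport A)
    (mem_ae_iff.mpr ((prob_compl_eq_zero_iff hZ.2.1.measurableSet).mpr hfull))

lemma hullOf_sInter_union (hM : ∀ T ∈ 𝒮, IsMarkov T) {B : Set (Set C(K, ℝ))}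
    (hA : A ⊆ {p | IsPrimitive 𝒮 p}) (hB : B ⊆ {p | IsPrimitive 𝒮 p}) :
    hullOf 𝒮 (⋂₀ (A ∪ B)) = hullOf 𝒮 (⋂₀ A) ∪ hullOf 𝒮 (⋂₀ B) := by
  refine subset_antisymm ?_ (Set.union_subset (hullOf_anti (Set.sInter_subset_sInter
    Set.subset_union_left)) (hullOf_anti (Set.sInter_subset_sInter Set.subset_union_right)))
  rintro _ ⟨⟨μ, hμ, rfl⟩, hsub⟩
  have := hμ.1.1
  have := hμ.1.2.1
  have hsupp := (sInter_subset_absKernel_iff (Set.union_subset hA hB) μ).mp hsub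
  rw [ergodicSupport_union] at hsupp
  have hcover : μ (ergodicSupport 𝒮 A ∪ ergodicSupport 𝒮 B) ≠ 0 :=
    (zero_lt_one.trans_le (measure_support_eq_one μ ▸ measure_mono hsupp)).ne'
  obtain h | h := not_and_or.mp (measure_union_null_iff.not.mp hcover)
  · exact .inl (absKernel_mem_hullOf_of_measure_ne_zero hM hA hμ h)
  · exact .inr (absKernel_mem_hullOf_of_measure_ne_zero hM hB hμ h)

end Hull

theorem stmt17_general {K : Type} [TopologicalSpace K] [CompactSpace K] [T2Space K]
    [MeasurableSpace K] [BorelSpace K]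
    (𝒮 : Subsemigroup (Module.End ℝ C(K, ℝ))) (hMarkov : ∀ T ∈ 𝒮, IsMarkov T) :
    (hullOf (𝒮 : Set (Module.End ℝ C(K, ℝ))) (⋂₀ (∅ : Set (Set C(K, ℝ)))) = ∅) ∧
    (∀ A : Set (Set C(K, ℝ)),
      A ⊆ {p | IsPrimitive (𝒮 : Set (Module.End ℝ C(K, ℝ))) p} →
      A ⊆ hullOf (𝒮 : Set (Module.End ℝ C(K, ℝ))) (⋂₀ A)) ∧
    (∀ A : Set (Set C(K, ℝ)),
      A ⊆ {p | IsPrimitive (𝒮 : Set (Module.End ℝ C(K, ℝ))) p} →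
      hullOf (𝒮 : Set (Module.End ℝ C(K, ℝ)))
          (⋂₀ hullOf (𝒮 : Set (Module.End ℝ C(K, ℝ))) (⋂₀ A)) =
        hullOf (𝒮 : Set (Module.End ℝ C(K, ℝ))) (⋂₀ A)) ∧
    (∀ A B : Set (Set C(K, ℝ)),
      A ⊆ {p | IsPrimitive (𝒮 : Set (Module.End ℝ C(K, ℝ))) p} →
      B ⊆ {p | IsPrimitive (𝒮 : Set (Module.End ℝ C(K, ℝ))) p} →
      hullOf (𝒮 : Set (Module.End ℝ C(K, ℝ))) (⋂₀ (A ∪ B)) =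
        hullOf (𝒮 : Set (Module.End ℝ C(K, ℝ))) (⋂₀ A) ∪
          hullOf (𝒮 : Set (Module.End ℝ C(K, ℝ))) (⋂₀ B)) :=
  ⟨Set.sInter_empty ▸ hullOf_univ, fun _ hA => subset_hullOf_sInter hA,
    fun _ _ => hullOf_sInter_hullOf _, fun _ _ hA hB => hullOf_sInter_union hMarkov hA hB⟩

/-- `A ↦ hull (ker A)` is a Kuratowski closure operator on subsets of `Prim(𝒮)`;
in particular `hull (ker (A ∪ B)) = hull (ker A) ∪ hull (ker B)`. -/
theorem stmt17 {K : Type} [TopologicalSpace K] [CompactSpace K] [T2Space K]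
    [MeasurableSpace K] [BorelSpace K]
    (𝒮 : Subsemigroup (Module.End ℝ C(K, ℝ))) (hMarkov : ∀ T ∈ 𝒮, IsMarkov T)
    (ham : RightAmenable 𝒮) :
    (hullOf (𝒮 : Set (Module.End ℝ C(K, ℝ))) (⋂₀ (∅ : Set (Set C(K, ℝ)))) = ∅) ∧
    (∀ A : Set (Set C(K, ℝ)),
      A ⊆ {p | IsPrimitive (𝒮 : Set (Module.End ℝ C(K, ℝ))) p} →
      A ⊆ hullOf (𝒮 : Set (Module.End ℝ C(K, ℝ))) (⋂₀ A)) ∧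
    (∀ A : Set (Set C(K, ℝ)),
      A ⊆ {p | IsPrimitive (𝒮 : Set (Module.End ℝ C(K, ℝ))) p} →
      hullOf (𝒮 : Set (Module.End ℝ C(K, ℝ)))
          (⋂₀ hullOf (𝒮 : Set (Module.End ℝ C(K, ℝ))) (⋂₀ A)) =
        hullOf (𝒮 : Set (Module.End ℝ C(K, ℝ))) (⋂₀ A)) ∧
    (∀ A B : Set (Set C(K, ℝ)),
      A ⊆ {p | IsPrimitive (𝒮 : Set (Module.End ℝ C(K, ℝ))) p} →
      B ⊆ {p | IsPrimitive (𝒮 : Set (Module.End ℝ C(K, ℝ))) p} →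
      hullOf (𝒮 : Set (Module.End ℝ C(K, ℝ))) (⋂₀ (A ∪ B)) =
        hullOf (𝒮 : Set (Module.End ℝ C(K, ℝ))) (⋂₀ A) ∪
          hullOf (𝒮 : Set (Module.End ℝ C(K, ℝ))) (⋂₀ B)) :=
  stmt17_general 𝒮 hMarkov
end
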